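/- arXiv:1706.09594 — 4 statements merged into one kernel-verified Lean document; each statement's English description precedes it below -/
import Mathlib

section
/- (Nielsen–Schreier index formula) Let n be a positive natural number and let H be a subgroup of the free group of rank n with finite index e. Then H is isomorphic to the free group of rank 1 + e·(n − 1). -/
/-!
`H` is the vertex group of the action groupoid of `F = FreeGroup (Fin n)` on `F ⧸ H`, a free groupoid
whose generating graph (the Schreier graph) has `e` vertices and `e * n` edges. A spanning tree has
`e - 1` edges, and the loops through the tree along the remaining `e * n - (e - 1)` edges form a
free basis of the vertex group.
-/

universe u v

namespace Quiver

variable {V : Type u} [Quiver.{v} V] [Arborescence V]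

lemma Arborescence.default_eq_cons {a b : V} (f : a ⟶ b) :
    (default : Path (Quiver.root V) b) = (default : Path (Quiver.root V) a).cons f :=
  Unique.default_eq _

lemma Arborescence.length_default_eq_succ {a b : V} (f : a ⟶ b) :
    (default : Path (Quiver.root V) b).length = (default : Path (Quiver.root V) a).length + 1 := by
  rw [default_eq_cons f, Path.length_cons]

lemma Arborescence.isEmpty_hom_root (a : V) : IsEmpty (a ⟶ Quiver.root V) :=
  ⟨fun f => by
    have h := (length_default_eq_succ f).symm.trans
      (congrArg Path.length (Unique.default_eq (Path.nil : Path (Quiver.root V) (Quiver.root V))))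
    simp at h⟩

lemma Arborescence.total_eq_of_right_eq {e e' : Total V} (h : e.right = e'.right) : e = e' := by
  obtain ⟨a, b, f⟩ := e
  obtain ⟨a', b', f'⟩ := e'
  cases h
  have hp := (default_eq_cons f).symm.trans (default_eq_cons f')
  cases Path.obj_eq_of_cons_eq_cons hp
  cases eq_of_heq (Path.hom_heq_of_cons_eq_cons hp)
  rfl

noncomputable def Arborescence.totalEquivNeRoot : Total V ≃ {b : V // b ≠ Quiver.root V} :=
  Equiv.ofBijective (fun e => ⟨e.right, fun h => (isEmpty_hom_root e.left).false (h ▸ e.hom)⟩)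
    ⟨fun e e' h => total_eq_of_right_eq (congrArg Subtype.val h), fun ⟨b, hb⟩ => by
      cases hp : (default : Path (Quiver.root V) b) with
      | nil => exact absurd rfl hb
      | cons p f => exact ⟨⟨_, _, f⟩, rfl⟩⟩

lemma Arborescence.card_total_add_one [Finite V] : Nat.card (Total V) + 1 = Nat.card V := by
  classical
  rw [Nat.card_congr totalEquivNeRoot, ← Finite.card_option,
    Nat.card_congr (Equiv.optionSubtypeNe _)]

lemma Arborescence.false_of_hom_of_hom {a b : V} (f : a ⟶ b) (g : b ⟶ a) : False := by
  have := length_default_eq_succ f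
  have := length_default_eq_succ g
  omega

variable {W : Type u} [Quiver.{v} W] (T : WideSubquiver (Symmetrify W)) [Arborescence T]

noncomputable def Arborescence.totalEquivSymmetrify :
    Total T ≃ wideSubquiverEquivSetTotal (wideSubquiverSymmetrify T) where
  toFun
    | ⟨a, b, ⟨.inl f, h⟩⟩ => ⟨⟨a, b, f⟩, .inl h⟩
    | ⟨a, b, ⟨.inr f, h⟩⟩ => ⟨⟨b, a, f⟩, .inr h⟩
  invFun
    | ⟨⟨a, b, f⟩, h⟩ => open Classical in
      if hf : .inl f ∈ T a b then ⟨a, b, ⟨.inl f, hf⟩⟩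
      else ⟨b, a, ⟨.inr f, h.resolve_left hf⟩⟩
  left_inv
    | ⟨a, b, ⟨.inl f, h⟩⟩ => by simp [h]
    | ⟨a, b, ⟨.inr f, h⟩⟩ => by
      have hf : .inl f ∉ T b a := fun hf =>
        false_of_hom_of_hom (show (b : T) ⟶ a from ⟨.inl f, hf⟩)
          (show (a : T) ⟶ b from ⟨.inr f, h⟩)
      simp [hf]
  right_inv
    | ⟨⟨a, b, f⟩, h⟩ => by
      by_cases hf : .inl f ∈ T a b <;> simp [hf]

end Quiver

open CategoryTheory Quiver

namespace IsFreeGroupoid.SpanningTree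

variable {G : Type u} [Groupoid.{u} G] [IsFreeGroupoid G]
  (T : WideSubquiver (Symmetrify <| Generators G)) [Arborescence T]

-- The private `root'` of Mathlib's `endIsFree`, under a name we can refer to.
def treeRoot : G := show T from root T

variable {T} {X : Type u} [Group X] {F : G ⥤ CategoryTheory.SingleObj X}

lemma map_homOfPath_eq_one
    (hF : ∀ {a b} (e : a ⟶ b), e ∈ wideSubquiverSymmetrify T a b → F.map (of e) = 1)
    {a : G} (p : Path (root T) a) : F.map (homOfPath T p) = 1 := by
  induction p with
  | nil => exact F.map_id _
  | cons p e ih =>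
    refine (F.map_comp _ _).trans ?_
    rw [SingleObj.comp_as_mul, ih, mul_one]
    rcases e with ⟨e | e, eT⟩
    · exact hF e (.inl eT)
    · rw [F.map_inv, SingleObj.inv_as_inv, inv_eq_one]
      exact hF e (.inr eT)

lemma map_loopOfHom
    (hF : ∀ {a b} (e : a ⟶ b), e ∈ wideSubquiverSymmetrify T a b → F.map (of e) = 1)
    {a b : G} (q : a ⟶ b) : F.map (loopOfHom T q) = F.map q := by
  simp only [loopOfHom, treeHom, Functor.map_comp, Functor.map_inv,
    SingleObj.comp_as_mul, SingleObj.inv_as_inv]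
  rw [map_homOfPath_eq_one hF, map_homOfPath_eq_one hF, inv_one, one_mul, mul_one]

variable (T) in
lemma loopOfHom_eq_self (x : End (treeRoot T)) : loopOfHom T x = x := by
  have h : treeHom T (treeRoot T) = 𝟙 (treeRoot T) := treeHom_root T
  change treeHom T (treeRoot T) ≫ x ≫ inv (treeHom T (treeRoot T)) = x
  simp only [h]
  erw [Category.id_comp, IsIso.inv_id]
  exact Category.comp_id x

-- `endIsFree` only asserts that a basis exists; counting needs it indexed by the non-tree edges.
variable (T) in
open scoped Classical in
noncomputable def endBasis :
    FreeGroupBasis ((wideSubquiverEquivSetTotal <| wideSubquiverSymmetrify T)ᶜ : Set _)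
      (End (treeRoot T)) :=
  FreeGroupBasis.ofUniqueLift _ (fun e => loopOfHom T (of e.val.hom)) fun {X} _ f => by
    let f' : Labelling (Generators G) X := fun a b e =>
      if h : e ∈ wideSubquiverSymmetrify T a b then 1 else f ⟨⟨a, b, e⟩, h⟩
    obtain ⟨F, hF, hF_unique⟩ := unique_lift f'
    have hF_tree {a b} (e : a ⟶ b) (he : e ∈ wideSubquiverSymmetrify T a b) :
        F.map (of e) = 1 := (hF a b e).trans (dif_pos he)
    refine ⟨F.mapEnd _, fun ⟨⟨a, b, e⟩, he⟩ => ?_, fun E hE => ?_⟩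
    · exact (map_loopOfHom hF_tree (of e)).trans ((hF a b e).trans (dif_neg he))
    · have : functorOfMonoidHom T E = F := hF_unique _ fun a b e => by
        change E (loopOfHom T (of e)) = dite _ _ _
        by_cases he : e ∈ wideSubquiverSymmetrify T a b
        · rw [dif_pos he]
          exact (congrArg E (loopOfHom_eq_id T e he)).trans E.map_one
        · rw [dif_neg he]
          exact hE ⟨⟨a, b, e⟩, he⟩
      ext x
      rw [← this]
      exact congrArg E (loopOfHom_eq_self T x).symm

end IsFreeGroupoid.SpanningTree

namespace IsFreeGroupoid

noncomputable def totalGeneratorsActionCategoryEquiv (G A : Type u) [Group G] [IsFreeGroup G]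
    [MulAction G A] :
    Total (Generators (ActionCategory G A)) ≃ A × IsFreeGroup.Generators G where
  toFun e := ((ActionCategory.objEquiv G A).symm e.left, e.hom.val)
  invFun p := ⟨ActionCategory.objEquiv G A p.1,
    ActionCategory.objEquiv G A (IsFreeGroup.of p.2 • p.1), ⟨p.2, rfl⟩⟩
  left_inv := by
    rintro ⟨a, b, ⟨x, hx⟩⟩
    obtain rfl : ActionCategory.objEquiv G A
        (IsFreeGroup.of x • (ActionCategory.objEquiv G A).symm a) = b :=
      (congrArg _ hx).trans ((ActionCategory.objEquiv G A).apply_symm_apply b)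
    rfl
  right_inv _ := rfl

end IsFreeGroupoid

open IsFreeGroupoid.SpanningTree in
theorem IsFreeGroupoid.card_generators_end_add_card {G : Type u} [Groupoid.{u} G]
    [CategoryTheory.IsConnected G] [IsFreeGroupoid G] [Finite G] [Finite (Total (Generators G))]
    (r : G) :
    Nat.card (IsFreeGroup.Generators (End r)) + Nat.card G =
      Nat.card (Total (Generators G)) + 1 := by
  have : RootedConnected (show Symmetrify (Generators G) from r) := generators_connected G r
  let T := geodesicSubtree (show Symmetrify (Generators G) from r)
  let S := wideSubquiverEquivSetTotal (wideSubquiverSymmetrify T)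
  have hbasis : Nat.card (IsFreeGroup.Generators (End r)) = Nat.card ↥Sᶜ :=
    Nat.card_congr <| .ofFreeGroupEquiv <| (IsFreeGroup.toFreeGroup _).symm.trans (endBasis T).repr
  have : Finite T := inferInstanceAs (Finite G)
  have htree : Nat.card S + 1 = Nat.card G := by
    rw [← Nat.card_congr (Arborescence.totalEquivSymmetrify T)]
    exact Arborescence.card_total_add_one
  have hedges : Nat.card S + Nat.card ↥Sᶜ = Nat.card (Total (Generators G)) :=
    Set.ncard_add_ncard_compl S
  omega

theorem IsFreeGroup.card_generators_subgroup_add_index {G : Type u} [Group G] [IsFreeGroup G]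
    [Finite (IsFreeGroup.Generators G)] (H : Subgroup G) [H.FiniteIndex] :
    Nat.card (IsFreeGroup.Generators H) + H.index =
      1 + H.index * Nat.card (IsFreeGroup.Generators G) := by
  have : Finite (ActionCategory G (G ⧸ H)) := Finite.of_equiv _ (ActionCategory.objEquiv G _)
  have : Finite (Total (IsFreeGroupoid.Generators (ActionCategory G (G ⧸ H)))) :=
    Finite.of_equiv _ (IsFreeGroupoid.totalGeneratorsActionCategoryEquiv G _).symm
  -- Mathlib's instance is for the category structure of `ActionCategory`, and instance search
  -- does not see through the one underlying its groupoid structure.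
  have : @CategoryTheory.IsConnected (ActionCategory G (G ⧸ H)) Groupoid.toCategory :=
    (inferInstance : CategoryTheory.IsConnected (ActionCategory G (G ⧸ H)))
  have h :=
    IsFreeGroupoid.card_generators_end_add_card (ActionCategory.objEquiv G (G ⧸ H) ↑(1 : G))
  rw [Nat.card_congr (Equiv.ofIsFreeGroupEquiv (ActionCategory.endMulEquivSubgroup H)),
    Nat.card_congr (IsFreeGroupoid.totalGeneratorsActionCategoryEquiv G _), Nat.card_prod,
    ← Nat.card_congr (ActionCategory.objEquiv G (G ⧸ H)), ← Subgroup.index] at h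
  omega

/-- Nielsen–Schreier index formula: a subgroup of finite index `e` in the free
group of rank `n > 0` is free of rank `1 + e * (n - 1)`. -/
theorem nielsen_schreier_index_formula (n : ℕ) (hn : 0 < n)
    (H : Subgroup (FreeGroup (Fin n))) (e : ℕ) (he : 1 ≤ e) (hidx : H.index = e) :
    Nonempty (H ≃* FreeGroup (Fin (1 + e * (n - 1)))) := by
  have : H.FiniteIndex := ⟨by omega⟩
  have hG : IsFreeGroup.Generators (FreeGroup (Fin n)) ≃ Fin n :=
    Equiv.ofFreeGroupEquiv (IsFreeGroup.toFreeGroup _).symm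
  have : Finite (IsFreeGroup.Generators (FreeGroup (Fin n))) := Finite.of_equiv _ hG.symm
  have h := IsFreeGroup.card_generators_subgroup_add_index H
  rw [hidx, Nat.card_congr hG, Nat.card_fin] at h
  have hH : Nat.card (IsFreeGroup.Generators H) = 1 + e * (n - 1) := by
    obtain ⟨m, rfl⟩ : ∃ m, n = m + 1 := ⟨n - 1, by omega⟩
    rw [Nat.add_sub_cancel]
    rw [mul_add_one] at h
    omega
  have : Finite (IsFreeGroup.Generators H) := Nat.finite_of_card_ne_zero (by omega)
  exact ⟨(IsFreeGroup.toFreeGroup H).trans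
    (FreeGroup.freeGroupCongr (Finite.equivFinOfCardEq hH))⟩
end

section
/- Let F be a finitely generated free group and let N be a nontrivial normal subgroup of F of infinite index. Then N is not finitely generated (as a group). -/
/-!
Let `N = ⟨S⟩` with every `s ∈ S` of length at most `L`, and let `1 ≠ x ∈ N`. Given `g`, prefix a
letter `a` so that `h = a g` is reduced and `h` and `x h` start with different letters; then `1`
lies on the geodesic in the Cayley tree from `h` to `x h = h (h⁻¹ x h)`. Writing `h⁻¹ x h ∈ N` as a
product of elements of `S^{±1}`, the path `h, h s₁, h s₁ s₂, …` moves in steps of length `≤ L`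
and must pass within `L` of `1`, so `g p` has length `≤ L + 1` for some `p ∈ N`. With finitely
many generators there are finitely many such elements, so `N` has finite index. Three letters are
excluded when choosing `a`, so this needs rank `≥ 2`; in rank `≤ 1` the group is cyclic.
-/

theorem Subgroup.FG.map {G H : Type*} [Group G] [Group H] {P : Subgroup G} (hP : P.FG)
    (f : G →* H) : (P.map f).FG := by
  classical
  obtain ⟨S, rfl⟩ := hP
  exact ⟨S.image f, by rw [Finset.coe_image, MonoidHom.map_closure]⟩

theorem finite_quotient_of_isCyclic {G : Type*} [Group G] [IsCyclic G] {N : Subgroup G}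
    [N.Normal] (hN : N ≠ ⊥) : Finite (G ⧸ N) := by
  obtain ⟨g, hg⟩ := IsCyclic.exists_generator (α := G)
  obtain ⟨x, hxN, hx1⟩ := (N.bot_or_exists_ne_one).resolve_left hN
  obtain ⟨m, rfl⟩ := Subgroup.mem_zpowers_iff.mp (hg x)
  have hgen : ∀ y : G ⧸ N, y ∈ Subgroup.zpowers (g : G ⧸ N) := by
    rintro ⟨y⟩
    obtain ⟨n, rfl⟩ := Subgroup.mem_zpowers_iff.mp (hg y)
    exact ⟨n, (QuotientGroup.mk_zpow N g n).symm⟩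
  have hfin : IsOfFinOrder (g : G ⧸ N) := isOfFinOrder_iff_zpow_eq_one.mpr
    ⟨m, by rintro rfl; exact hx1 (zpow_zero g),
      by rw [← QuotientGroup.mk_zpow N, QuotientGroup.eq_one_iff]; exact hxN⟩
  exact Nat.finite_of_card_ne_zero
    (orderOf_eq_card_of_forall_mem_zpowers hgen ▸ hfin.orderOf_pos.ne')

namespace FreeGroup

variable {α : Type*}

instance [Subsingleton α] : IsCyclic (FreeGroup α) := by
  cases isEmpty_or_nonempty α
  · infer_instance
  · have := uniqueOfSubsingleton (Classical.arbitrary α)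
    infer_instance

lemma exists_letter_notMem_of_card_le_three [Nontrivial α] (s : Finset (α × Bool))
    (hs : s.card ≤ 3) : ∃ a, a ∉ s := by
  classical
  obtain ⟨y, z, hyz⟩ := exists_pair_ne α
  obtain ⟨a, -, ha⟩ := Finset.exists_mem_notMem_of_card_lt_card
    (s := s) (t := {y, z} ×ˢ Finset.univ)
    (by simp [Finset.card_product, Finset.card_pair hyz]; omega)
  exact ⟨a, ha⟩

lemma letter_rel_of_ne_inv {a b : α × Bool} (h : b ≠ (a.1, !a.2)) : a.1 = b.1 → a.2 = b.2 := by
  obtain ⟨a₁, a₂⟩ := a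
  obtain ⟨b₁, b₂⟩ := b
  rintro (rfl : a₁ = b₁)
  cases a₂ <;> cases b₂ <;> simp_all

section DecidableEq

variable [DecidableEq α]

lemma toWord_mul_of_isReduced {x y : FreeGroup α} (h : IsReduced (x.toWord ++ y.toWord)) :
    (x * y).toWord = x.toWord ++ y.toWord := by
  rw [toWord_mul, h.reduce_eq]

/-- `Diverge a b` says that the geodesics from `1` to `a` and to `b` in the Cayley tree leave `1`
along different edges, i.e. that `1` lies on the geodesic from `a` to `b`. -/
def Diverge (a b : FreeGroup α) : Prop :=
  a = 1 ∨ b = 1 ∨ a.toWord.head? ≠ b.toWord.head?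

theorem Diverge.split {a c : FreeGroup α} (h : Diverge a c) (b : FreeGroup α) :
    Diverge a b ∨ Diverge b c := by
  by_cases hab : a.toWord.head? = b.toWord.head?
  · rcases h with h | h | h
    · exact .inl (.inl h)
    · exact .inr (.inr (.inl h))
    · exact .inr (.inr (.inr (hab ▸ h)))
  · exact .inl (.inr (.inr hab))

theorem Diverge.norm_inv_mul {a b : FreeGroup α} (h : Diverge a b) :
    norm (a⁻¹ * b) = norm a + norm b := by
  rcases h with rfl | rfl | h
  · simp
  · simp [norm_inv_eq]
  rcases eq_or_ne a 1 with rfl | ha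
  · simp
  obtain ⟨c, t, hc⟩ := List.exists_cons_of_ne_nil (mt toWord_eq_nil_iff.mp ha)
  have hred : IsReduced (a⁻¹.toWord ++ b.toWord) := by
    refine List.isChain_append.mpr ⟨isReduced_toWord, isReduced_toWord, ?_⟩
    rw [toWord_inv, hc, invRev_cons]
    intro x hx d hd
    simp only [invRev, List.map_cons, List.map_nil, List.reverse_cons, List.reverse_nil,
      List.nil_append, List.getLast?_append, List.getLast?_singleton, Option.some_or,
      Option.mem_def, Option.some.injEq] at hx
    subst hx
    refine letter_rel_of_ne_inv fun hdc => h ?_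
    rw [hc, Option.mem_def.mp hd, hdc]
    simp
  simp only [norm, toWord_mul_of_isReduced hred, List.length_append, toWord_inv, invRev_length]

theorem eq_one_of_diverge_self {a : FreeGroup α} (h : Diverge a a) : a = 1 := by
  have := h.norm_inv_mul
  rw [inv_mul_cancel, norm_one] at this
  exact norm_eq_zero.mp (by omega)

theorem exists_mem_closure_norm_mul_le {S : Set (FreeGroup α)} {L : ℕ}
    (hS : ∀ s ∈ S, norm s ≤ L) {w : FreeGroup α} (hw : w ∈ Subgroup.closure S) :
    ∀ h, Diverge h (h * w) → ∃ p ∈ Subgroup.closure S, norm (h * p) ≤ L := by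
  have step : ∀ s ∈ Subgroup.closure S, norm s ≤ L → ∀ y,
      (∀ h, Diverge h (h * y) → ∃ p ∈ Subgroup.closure S, norm (h * p) ≤ L) →
      ∀ h, Diverge h (h * (s * y)) → ∃ p ∈ Subgroup.closure S, norm (h * p) ≤ L := by
    intro s hs hsL y ih h hdiv
    rcases hdiv.split (h * s) with hfirst | hrest
    · refine ⟨1, one_mem _, ?_⟩
      have := hfirst.norm_inv_mul
      rw [inv_mul_cancel_left] at this
      rw [mul_one]
      omega
    · obtain ⟨p, hp, hpL⟩ := ih (h * s) (by rwa [mul_assoc])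
      exact ⟨s * p, mul_mem hs hp, by rwa [← mul_assoc]⟩
  induction hw using Subgroup.closure_induction_left with
  | one => intro h hh; exact ⟨1, one_mem _, by simp [eq_one_of_diverge_self (by simpa using hh)]⟩
  | mul_left s hs y _ ih => exact step s (Subgroup.subset_closure hs) (hS s hs) y ih
  | inv_mul_cancel s hs y _ ih =>
    exact step s⁻¹ (inv_mem (Subgroup.subset_closure hs)) (by rw [norm_inv_eq]; exact hS s hs)
      y ih

theorem exists_diverge_letter_mul [Nontrivial α] {x : FreeGroup α} (hx : x ≠ 1)
    (g : FreeGroup α) : ∃ a : α × Bool, Diverge (mk [a] * g) (x * (mk [a] * g)) := by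
  obtain ⟨c, t, hc⟩ := List.exists_cons_of_ne_nil (mt toWord_eq_nil_iff.mp hx)
  have hlast : x.toWord.getLast? = some (x.toWord.getLast (by simp [hc])) :=
    List.getLast?_eq_some_getLast _
  set l := x.toWord.getLast (by simp [hc])
  obtain ⟨a, ha⟩ := exists_letter_notMem_of_card_le_three
    ({c, (l.1, !l.2)} ∪ (g.toWord.head?.map fun d => (d.1, !d.2)).toFinset) (by
      refine (Finset.card_union_le _ _).trans ?_
      have : ({c, (l.1, !l.2)} : Finset (α × Bool)).card ≤ 2 := Finset.card_le_two
      have : (g.toWord.head?.map fun d => (d.1, !d.2)).toFinset.card ≤ 1 := by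
        cases g.toWord.head? <;> simp
      omega)
  simp only [Finset.mem_union, Finset.mem_insert, Finset.mem_singleton, Option.mem_toFinset,
    Option.mem_def, Option.map_eq_some_iff, not_or, not_exists, not_and] at ha
  obtain ⟨⟨hac, hal⟩, hag⟩ := ha
  have hag' : IsReduced (a :: g.toWord) := List.isChain_cons.mpr
    ⟨fun d hd => letter_rel_of_ne_inv fun h => hag d hd (by rw [h]; simp), isReduced_toWord⟩
  have hh : (mk [a] * g).toWord = a :: g.toWord := by
    rw [toWord_mul, toWord_mk, reduce_singleton]; exact hag'.reduce_eq
  have hxa : IsReduced (x.toWord ++ [a]) := by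
    refine List.isChain_append.mpr ⟨isReduced_toWord, IsReduced.singleton, ?_⟩
    rw [hlast]
    rintro _ ⟨⟩ _ ⟨⟩
    exact letter_rel_of_ne_inv fun h => hal (by rw [← h])
  have hxh : (x * (mk [a] * g)).toWord = x.toWord ++ [a] ++ g.toWord := by
    rw [toWord_mul, hh, ← List.singleton_append, ← List.append_assoc]
    exact (hxa.append_overlap hag' (List.cons_ne_nil _ _)).reduce_eq
  refine ⟨a, .inr (.inr ?_)⟩
  rw [hh, hxh, hc]
  simpa using hac

theorem exists_norm_mul_le_of_fg [Nontrivial α] {N : Subgroup (FreeGroup α)} [N.Normal]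
    (hne : N ≠ ⊥) (hfg : N.FG) : ∃ L, ∀ g, ∃ p ∈ N, norm (g * p) ≤ L := by
  obtain ⟨S, rfl⟩ := hfg
  obtain ⟨x, hxN, hx1⟩ := (Subgroup.bot_or_exists_ne_one _).resolve_left hne
  refine ⟨S.sup norm + 1, fun g => ?_⟩
  obtain ⟨a, ha⟩ := exists_diverge_letter_mul hx1 g
  generalize hh : mk [a] * g = h at ha
  obtain ⟨p, hp, hpL⟩ := exists_mem_closure_norm_mul_le (fun s hs => Finset.le_sup hs)
    (Subgroup.Normal.conj_mem' inferInstance x hxN h) h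
    (by rwa [show h * (h⁻¹ * x * h) = x * h by group])
  refine ⟨p, hp, ?_⟩
  calc norm (g * p) = norm ((mk [a])⁻¹ * (h * p)) := by rw [← hh]; group
    _ ≤ norm (mk [a]) + norm (h * p) := by
        simpa only [norm_inv_eq] using norm_mul_le (mk [a])⁻¹ (h * p)
    _ ≤ S.sup norm + 1 := by have := norm_mk_le (L₁ := [a]); simp at this; omega

theorem finite_setOf_norm_le [Finite α] (n : ℕ) : {x : FreeGroup α | norm x ≤ n}.Finite :=
  (List.finite_length_le (α × Bool) n).preimage toWord_injective.injOn

end DecidableEq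

theorem finite_quotient_of_fg [Finite α] {N : Subgroup (FreeGroup α)} [N.Normal] (hne : N ≠ ⊥)
    (hfg : N.FG) : Finite (FreeGroup α ⧸ N) := by
  classical
  cases subsingleton_or_nontrivial α
  · exact finite_quotient_of_isCyclic hne
  obtain ⟨L, hL⟩ := exists_norm_mul_le_of_fg hne hfg
  refine Set.finite_univ_iff.mp <| ((finite_setOf_norm_le L).image QuotientGroup.mk).subset ?_
  rintro ⟨g⟩ -
  obtain ⟨p, hp, hgp⟩ := hL g
  exact ⟨g * p, hgp, QuotientGroup.eq.mpr (by simpa using hp)⟩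

end FreeGroup

theorem normal_subgroup_infinite_index_not_fg_general (F : Type*) [Group F] (k : ℕ)
    (hfree : Nonempty (F ≃* FreeGroup (Fin k)))
    (N : Subgroup F) (hN : N.Normal) (hnontriv : N ≠ ⊥)
    (hinf : Infinite (F ⧸ N)) : ¬ N.FG := by
  intro hfg
  obtain ⟨e⟩ := hfree
  have : (N.map (e : F →* FreeGroup (Fin k))).Normal := hN.map _ e.surjective
  have : Finite (FreeGroup (Fin k) ⧸ N.map (e : F →* FreeGroup (Fin k))) :=
    FreeGroup.finite_quotient_of_fg
      ((Subgroup.map_eq_bot_iff_of_injective N e.injective).not.mpr hnontriv) (hfg.map _)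
  exact not_finite_iff_infinite.mpr hinf (.of_equiv _ (QuotientGroup.congr N _ e rfl).toEquiv.symm)

/-- A nontrivial normal subgroup of infinite index in a finitely generated free
group is not finitely generated. -/
theorem normal_subgroup_infinite_index_not_fg (F : Type*) [Group F] (k : ℕ) (hk : 1 ≤ k)
    (hfree : Nonempty (F ≃* FreeGroup (Fin k)))
    (N : Subgroup F) (hN : N.Normal) (hnontriv : N ≠ ⊥)
    (hinf : Infinite (F ⧸ N)) : ¬ N.FG :=
  normal_subgroup_infinite_index_not_fg_general F k hfree N hN hnontriv hinf
end

section
/- For all natural numbers n ≥ 2 and k ≥ 1, the free group of rank n has a normal subgroup of index k that is isomorphic to the free group of rank 1 + k·(n − 1). -/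
/-!
Write `F(t, x_j)` for the free group on `t` and letters `x_j`, `j ∈ J`. Sending `t ↦ t` and
`x_j ↦ x_{0,j}` identifies it with `F(x_{i,j} : i ∈ ℤ, j ∈ J) ⋊ ⟨t⟩`, where `t` shifts the index
`i`; the inverse sends `x_{i,j} ↦ tⁱ x_j t⁻ⁱ`. The kernel of the map to `ℤ/k` reading off the
exponent sum of `t` is normal of index `k` and equals `F(x_{i,j}) ⋊ ⟨tᵏ⟩`. Writing `i = q k + r`
exhibits this as a shift semidirect product again, now over the `k |J|` letters `x_{(r,j)}`,
so it is free on `1 + k |J|` generators.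
-/

open SemidirectProduct Multiplicative

namespace FreeGroup

variable (J : Type*)

def shift : Multiplicative ℤ →* MulAut (FreeGroup (ℤ × J)) where
  toFun m := freeGroupCongr ((Equiv.addRight m.toAdd).prodCongr (Equiv.refl J))
  map_one' := MulEquiv.toMonoidHom_injective <| FreeGroup.ext_hom _ _ fun p => by simp
  map_mul' a b := MulEquiv.toMonoidHom_injective <| FreeGroup.ext_hom _ _ fun ⟨i, j⟩ => by
    simp [add_assoc, add_comm (toAdd b)]

@[simp]
lemma shift_of (m : Multiplicative ℤ) (p : ℤ × J) :
    shift J m (of p) = of (p.1 + m.toAdd, p.2) :=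
  rfl

abbrev ShiftSemidirect := FreeGroup (ℤ × J) ⋊[shift J] Multiplicative ℤ

def toShiftSemidirect : FreeGroup (Option J) →* ShiftSemidirect J :=
  FreeGroup.lift fun o => o.elim (inr (ofAdd 1)) fun j => inl (of (0, j))

@[simp]
lemma toShiftSemidirect_of_none : toShiftSemidirect J (of none) = inr (ofAdd 1) := by
  simp [toShiftSemidirect]

@[simp]
lemma toShiftSemidirect_of_some (j : J) :
    toShiftSemidirect J (of (some j)) = inl (of (0, j)) := by
  simp [toShiftSemidirect]

def ofShiftSemidirect : ShiftSemidirect J →* FreeGroup (Option J) :=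
  SemidirectProduct.lift
    (FreeGroup.lift fun p => of none ^ p.1 * of (some p.2) * (of none ^ p.1)⁻¹)
    (zpowersHom _ (of none))
    fun m => FreeGroup.ext_hom _ _ fun p => by
      simp only [MonoidHom.comp_apply, MulEquiv.coe_toMonoidHom, shift_of, lift_apply_of,
        MulAut.conj_apply, zpowersHom_apply, zpow_add]
      group

lemma ofShiftSemidirect_comp_toShiftSemidirect :
    (ofShiftSemidirect J).comp (toShiftSemidirect J) = MonoidHom.id _ :=
  FreeGroup.ext_hom _ _ fun o => by cases o <;> simp [ofShiftSemidirect]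

lemma toShiftSemidirect_comp_ofShiftSemidirect :
    (toShiftSemidirect J).comp (ofShiftSemidirect J) = MonoidHom.id _ := by
  have hpow (i : ℤ) : toShiftSemidirect J (of none ^ i) = inr (ofAdd i) := by
    rw [map_zpow, toShiftSemidirect_of_none, ← map_zpow, ← Int.ofAdd_mul, one_mul]
  refine SemidirectProduct.hom_ext (FreeGroup.ext_hom _ _ fun ⟨i, j⟩ => ?_)
    (MonoidHom.ext fun m => ?_)
  · simp only [ofShiftSemidirect, MonoidHom.comp_apply, lift_inl, lift_apply_of,
      MonoidHom.id_apply, _root_.map_mul, _root_.map_inv, hpow, toShiftSemidirect_of_some]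
    rw [← _root_.map_inv, ← inl_aut, shift_of, toAdd_ofAdd, zero_add]
  · simpa [ofShiftSemidirect] using hpow m.toAdd

def optionEquivShiftSemidirect : FreeGroup (Option J) ≃* ShiftSemidirect J :=
  (toShiftSemidirect J).toMulEquiv (ofShiftSemidirect J)
    (ofShiftSemidirect_comp_toShiftSemidirect J) (toShiftSemidirect_comp_ofShiftSemidirect J)

namespace ShiftSemidirect

variable (k : ℕ)

def degMod : ShiftSemidirect J →* Multiplicative (ZMod k) :=
  (AddMonoidHom.toMultiplicative (Int.castAddHom (ZMod k))).comp rightHom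

lemma degMod_surjective : Function.Surjective (degMod J k) :=
  (ZMod.intCast_surjective.comp toAdd.surjective).comp rightHom_surjective

lemma index_ker_degMod : (degMod J k).ker.index = k := by
  rw [Subgroup.index_ker, (degMod J k).range_eq_top_of_surjective (degMod_surjective J k),
    Subgroup.card_top, Nat.card_congr toAdd, Nat.card_zmod]

variable [NeZero k]

def blockEquiv : ℤ × (Fin k × J) ≃ ℤ × J :=
  (Equiv.prodAssoc ℤ (Fin k) J).symm.trans ((Int.divModEquiv k).symm.prodCongr (Equiv.refl J))

@[simp]
lemma blockEquiv_apply (q : ℤ) (r : Fin k) (j : J) :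
    blockEquiv J k (q, r, j) = (q * k + r, j) :=
  rfl

def stretch : ShiftSemidirect (Fin k × J) →* ShiftSemidirect J :=
  SemidirectProduct.map (freeGroupCongr (blockEquiv J k)).toMonoidHom (powMonoidHom k)
    fun m => FreeGroup.ext_hom _ _ fun ⟨q, r, j⟩ => by
      simp only [MulEquiv.toMonoidHom_eq_coe, MonoidHom.coe_comp, MonoidHom.coe_coe,
        Function.comp_apply, shift_of, freeGroupCongr_apply, map.of, blockEquiv_apply,
        powMonoidHom_apply, toAdd_pow, Int.nsmul_eq_mul]
      ring_nf

lemma stretch_injective : Function.Injective (stretch J k) := fun _ _ h =>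
  SemidirectProduct.ext ((freeGroupCongr (blockEquiv J k)).injective (congrArg left h))
    (pow_left_injective (NeZero.ne k) (congrArg right h))

lemma range_stretch : (stretch J k).range = (degMod J k).ker := by
  ext x
  constructor
  · rintro ⟨y, rfl⟩
    simp [stretch, degMod]
  · intro hx
    obtain ⟨q, hq⟩ : (k : ℤ) ∣ toAdd x.right :=
      (ZMod.intCast_zmod_eq_zero_iff_dvd _ _).1 (by simpa [degMod] using hx)
    refine ⟨⟨(freeGroupCongr (blockEquiv J k)).symm x.left, ofAdd q⟩, SemidirectProduct.ext ?_ ?_⟩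
    · exact (freeGroupCongr (blockEquiv J k)).apply_symm_apply x.left
    · show ofAdd q ^ k = x.right
      rw [← ofAdd_nsmul, nsmul_eq_mul, ← hq, ofAdd_toAdd]

noncomputable def kerDegModEquiv : (degMod J k).ker ≃* FreeGroup (Option (Fin k × J)) :=
  (MulEquiv.subgroupCongr (range_stretch J k)).symm.trans <|
    (MonoidHom.ofInjective (stretch_injective J k)).symm.trans
      (optionEquivShiftSemidirect _).symm

end ShiftSemidirect

end FreeGroup

open FreeGroup ShiftSemidirect

/-- For all naturals `n ≥ 2` and `k ≥ 1`, the free group of rank `n` has a normal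
subgroup of index `k` isomorphic to the free group of rank `1 + k * (n - 1)`. -/
theorem free_group_exists_normal_subgroup (n k : ℕ) (hn : 2 ≤ n) (hk : 1 ≤ k) :
    ∃ N : Subgroup (FreeGroup (Fin n)), N.Normal ∧ N.index = k ∧
      Nonempty (N ≃* FreeGroup (Fin (1 + k * (n - 1)))) := by
  have : NeZero k := ⟨by omega⟩
  obtain ⟨m, rfl⟩ : ∃ m, n = m + 1 := ⟨n - 1, by omega⟩
  let e : ShiftSemidirect (Fin m) ≃* FreeGroup (Fin (m + 1)) :=
    (optionEquivShiftSemidirect (Fin m)).symm.trans (freeGroupCongr (finSuccEquiv m).symm)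
  let rank : Option (Fin k × Fin m) ≃ Fin (1 + k * (m + 1 - 1)) :=
    (Equiv.optionCongr finProdFinEquiv).trans <|
      (finSuccEquiv _).symm.trans (finCongr (by simp [add_comm]))
  refine ⟨(degMod (Fin m) k).ker.map e.toMonoidHom, .map inferInstance _ e.surjective, ?_, ⟨?_⟩⟩
  · rw [Subgroup.index_map_of_bijective e.bijective, index_ker_degMod]
  · exact (e.subgroupMap _).symm.trans ((kerDegModEquiv _ k).trans (freeGroupCongr rank))
end

section
/- Let m, n be natural numbers with m ≥ 2 and n ≥ 2. If the free group of rank n has a nontrivial normal subgroup of finite index that is isomorphic to the free group of rank m, then (n − 1) divides (m − 1). -/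
/-!
Take `C = Coind_N^F ℚ`, the functions on `N \ F`, with `F` acting by right translation; it has
dimension `[F : N]` and its invariants are the constants. By Shapiro's lemma
`H¹(F, C) ≅ H¹(N, ℚ) = Hom(N, ℚ)`, of dimension `m` since `N` is free of rank `m`. On the other
hand a `1`-cocycle on the free group `F` is freely determined by its values on the `n`
generators, and the coboundaries are `C` modulo its invariants, so
`dim H¹(F, C) = n [F : N] - ([F : N] - 1)`. Hence `m - 1 = [F : N] (n - 1)`.
-/

open groupCohomology Multiplicative

universe u

section CommRing

variable {k G : Type u} [CommRing k] [Group G]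

def Rep.mulAut (A : Rep k G) : G →* MulAut (Multiplicative A) where
  toFun g := AddEquiv.toMultiplicative
    (LinearMap.GeneralLinearGroup.toLinearEquiv (A.ρ.asGroupHom g)).toAddEquiv
  map_one' := by ext; simp
  map_mul' g h := by ext; simp

@[simp]
lemma Rep.mulAut_apply (A : Rep k G) (g : G) (x : Multiplicative A) :
    A.mulAut g x = ofAdd (A.ρ g x.toAdd) := rfl

namespace groupCohomology

variable {A : Rep k G}

/-- The cocycle identity for `f` is exactly multiplicativity of `g ↦ (f g, g)`. -/
def cocycles₁.toSemidirect (f : cocycles₁ A) : G →* Multiplicative A ⋊[A.mulAut] G where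
  toFun g := ⟨ofAdd (f g), g⟩
  map_one' := by ext <;> simp
  map_mul' g h := by
    ext
    · simp [(mem_cocycles₁_iff f).1 f.2, add_comm]
    · rfl

lemma cocycles₁.toSemidirect_injective :
    Function.Injective (cocycles₁.toSemidirect (A := A)) := fun f f' h ↦
  cocycles₁_ext fun g ↦ by simpa [toSemidirect] using congr_arg (fun ψ ↦ (ψ g).left) h

variable {α : Type u} (A : Rep k (FreeGroup α))

def freeGroupLift (v : α → A) : FreeGroup α →* Multiplicative A ⋊[A.mulAut] FreeGroup α :=
  FreeGroup.lift fun i ↦ ⟨ofAdd (v i), .of i⟩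

lemma freeGroupLift_right (v : α → A) (g : FreeGroup α) : (freeGroupLift A v g).right = g := by
  have : SemidirectProduct.rightHom.comp (freeGroupLift A v) = .id _ :=
    FreeGroup.ext_hom _ _ fun i ↦ by simp [freeGroupLift]
  exact DFunLike.congr_fun this g

def cocyclesOfFreeGroup (v : α → A) : cocycles₁ A :=
  ⟨fun g ↦ (freeGroupLift A v g).left.toAdd, (mem_cocycles₁_iff _).2 fun g h ↦ by
    simp [freeGroupLift_right, add_comm]⟩

def cocycles₁FreeGroupEquiv : cocycles₁ A ≃ₗ[k] (α → A) where
  toFun f i := f (.of i)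
  map_add' _ _ := rfl
  map_smul' _ _ := rfl
  invFun := cocyclesOfFreeGroup A
  left_inv f := cocycles₁.toSemidirect_injective <| FreeGroup.ext_hom _ _ fun i ↦ by
    ext
    · simp [cocycles₁.toSemidirect, cocyclesOfFreeGroup, freeGroupLift]
    · rfl
  right_inv v := funext fun i ↦ by simp [cocyclesOfFreeGroup, freeGroupLift]

instance [Finite α] [Module.Finite k A] : Module.Finite k (cocycles₁ A) :=
  .equiv (cocycles₁FreeGroupEquiv A).symm

end groupCohomology

namespace Rep

variable (S : Subgroup G)

lemma coind_trivial_apply_mul (f : coind S.subtype (trivial k S k)) (s : S) (g : G) :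
    f.1 (s * g) = f.1 g :=
  f.2 s g

def coindTrivialEquiv :
    coind S.subtype (trivial k S k) ≃ₗ[k] (Quotient (QuotientGroup.rightRel S) → k) where
  toFun f := Quotient.lift f.1 fun a b hab ↦ by
    rw [← coind_trivial_apply_mul S f ⟨_, QuotientGroup.rightRel_apply.1 hab⟩ a]
    simp
  map_add' _ _ := by ext ⟨_⟩; rfl
  map_smul' _ _ := by ext ⟨_⟩; rfl
  invFun φ := ⟨fun g ↦ φ ⟦g⟧, fun s g ↦
    congr_arg φ <| Quotient.sound' <| QuotientGroup.rightRel_apply.2 (by simp)⟩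
  left_inv _ := rfl
  right_inv φ := by ext ⟨_⟩; rfl

def coindTrivialInvariantsEquiv :
    (coind S.subtype (trivial k S k)).ρ.invariants ≃ₗ[k] k where
  toFun f := f.1.1 1
  map_add' _ _ := rfl
  map_smul' _ _ := rfl
  invFun c := ⟨⟨fun _ ↦ c, fun _ _ ↦ rfl⟩, fun _ ↦ rfl⟩
  left_inv f := by
    ext g
    exact (congr_arg (fun x ↦ x.1 1) (f.2 g)).symm.trans (congr_arg f.1.1 (one_mul g))
  right_inv _ := rfl

instance [S.FiniteIndex] : Module.Finite k (coind S.subtype (trivial k S k)) :=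
  have : Finite (Quotient (QuotientGroup.rightRel S)) :=
    .of_equiv _ (QuotientGroup.quotientRightRelEquivQuotientLeftRel S).symm
  .equiv (coindTrivialEquiv S).symm

end Rep

end CommRing

def FreeGroupBasis.addMonoidHomEquiv {ι G k M : Type*} [Group G] [Semiring k] [AddCommGroup M]
    [Module k M] (b : FreeGroupBasis ι G) : (Additive G →+ M) ≃ₗ[k] (ι → M) where
  toFun f i := f (.ofMul (b i))
  map_add' _ _ := rfl
  map_smul' _ _ := rfl
  invFun v := MonoidHom.toAdditiveLeft (b.lift fun i ↦ ofAdd (v i))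
  left_inv f := MonoidHom.toAdditiveLeft.symm.injective <| b.ext_hom _ _ fun i ↦ by simp
  right_inv v := by ext; simp

section Field

variable {k G : Type u} [Field k] [Group G]

lemma Rep.finrank_coind_trivial (S : Subgroup G) [S.FiniteIndex] :
    Module.finrank k (coind S.subtype (trivial k S k)) = S.index := by
  have := Fintype.ofFinite (G ⧸ S)
  rw [(coindTrivialEquiv S).finrank_eq, Module.finrank_fintype_fun_eq_card,
    Fintype.card_congr (QuotientGroup.quotientRightRelEquivQuotientLeftRel S),
    S.index_eq_card, Nat.card_eq_fintype_card]

lemma Rep.finrank_invariants_coind_trivial (S : Subgroup G) :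
    Module.finrank k (coind S.subtype (trivial k S k)).ρ.invariants = 1 := by
  rw [(coindTrivialInvariantsEquiv S).finrank_eq, Module.finrank_self]

namespace groupCohomology

lemma finrank_cocycles₁_freeGroup {α : Type u} [Fintype α] (A : Rep k (FreeGroup α))
    [Module.Finite k A] :
    Module.finrank k (cocycles₁ A) = Fintype.card α * Module.finrank k A := by
  rw [(cocycles₁FreeGroupEquiv A).finrank_eq, Module.finrank_pi_fintype]
  simp

variable (A : Rep k G)

lemma finrank_coboundaries₁_add_finrank_invariants [Module.Finite k A] :
    Module.finrank k (coboundaries₁ A) + Module.finrank k A.ρ.invariants =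
      Module.finrank k A := by
  rw [← d₀₁_ker_eq_invariants]
  exact (d₀₁ A).hom.finrank_range_add_finrank_ker

lemma finrank_H1_add_finrank_coboundaries₁ [Module.Finite k (cocycles₁ A)] :
    Module.finrank k (H1 A) + Module.finrank k (coboundaries₁ A) =
      Module.finrank k (cocycles₁ A) := by
  have hsurj : Function.Surjective (H1π A).hom :=
    (ModuleCat.epi_iff_surjective _).1 inferInstance
  have hker : LinearMap.ker (H1π A).hom = (coboundaries₁ A).comap (cocycles₁ A).subtype := by
    ext x
    exact H1π_eq_zero_iff x
  rw [← (H1π A).hom.finrank_range_add_finrank_ker, LinearMap.range_eq_top.2 hsurj, finrank_top,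
    hker, (Submodule.comapSubtypeEquivOfLe (coboundaries₁_le_cocycles₁ A)).finrank_eq]

lemma finrank_H1_trivial {ι : Type u} [Fintype ι] (b : FreeGroupBasis ι G) :
    Module.finrank k (H1 (Rep.trivial k G k)) = Fintype.card ι := by
  rw [(H1IsoOfIsTrivial _).toLinearEquiv.finrank_eq, b.addMonoidHomEquiv.finrank_eq,
    Module.finrank_fintype_fun_eq_card]

end groupCohomology

end Field

/-- The Nielsen–Schreier index formula. -/
theorem FreeGroup.card_add_index_eq {α ι : Type} [Fintype α] [Fintype ι]
    (S : Subgroup (FreeGroup α)) [S.FiniteIndex] (b : FreeGroupBasis ι S) :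
    Fintype.card ι + S.index = Fintype.card α * S.index + 1 := by
  let C := Rep.coind S.subtype (Rep.trivial ℚ S ℚ)
  have hH1 : Module.finrank ℚ (H1 C) = Fintype.card ι :=
    (coindIso _ 1).toLinearEquiv.finrank_eq.trans (finrank_H1_trivial b)
  have hZ : Module.finrank ℚ (cocycles₁ C) = Fintype.card α * S.index := by
    rw [finrank_cocycles₁_freeGroup, Rep.finrank_coind_trivial]
  have hB := finrank_coboundaries₁_add_finrank_invariants C
  rw [Rep.finrank_invariants_coind_trivial, Rep.finrank_coind_trivial] at hB
  have hH1BZ := finrank_H1_add_finrank_coboundaries₁ C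
  omega

theorem normal_subgroup_rank_divisibility_general (m n : ℕ)
    (N : Subgroup (FreeGroup (Fin n)))
    (hfin : Finite (FreeGroup (Fin n) ⧸ N))
    (hiso : Nonempty (N ≃* FreeGroup (Fin m))) :
    (n - 1) ∣ (m - 1) := by
  have := Subgroup.finiteIndex_of_finite_quotient (H := N)
  have hformula := FreeGroup.card_add_index_eq N (.ofRepr hiso.some)
  simp only [Fintype.card_fin] at hformula
  exact ⟨N.index, by rw [Nat.sub_one_mul]; omega⟩

/-- If the free group of rank `n ≥ 2` has a nontrivial normal subgroup of finite
index isomorphic to the free group of rank `m ≥ 2`, then `(n - 1) ∣ (m - 1)`. -/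
theorem normal_subgroup_rank_divisibility (m n : ℕ) (hm : 2 ≤ m) (hn : 2 ≤ n)
    (N : Subgroup (FreeGroup (Fin n))) (hnorm : N.Normal) (hnontriv : N ≠ ⊥)
    (hfin : Finite (FreeGroup (Fin n) ⧸ N))
    (hiso : Nonempty (N ≃* FreeGroup (Fin m))) :
    (n - 1) ∣ (m - 1) :=
  normal_subgroup_rank_divisibility_general m n N hfin hiso
end
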